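/- arXiv:2304.04410 — 2 statements merged into one kernel-verified Lean document; each statement's English description precedes it below -/
import Mathlib

section
/- Let ε > 0 be real, let n ≥ 1, d ≥ s ≥ 1 and t > s be integers, and let x_1,…,x_n ∈ 𝒳^s. Suppose each user i independently draws H^i uniformly at random from all functions 𝒴 → [t] and, given H^i, draws z^i from the (d,s,ε,t)-Collision mechanism on x_i with hash H^i. Define, for each (j,b) ∈ 𝒴, the frequency estimator f̂_{j,b} = (1/n)·Σ_{i=1}^n ( 𝟙[H^i(j,b) = z^i] − 1/t )/( e^ε/Ω − 1/t ) and the true frequency f_{j,b} = (1/n)·Σ_{i=1}^n 𝟙[(j,b) ∈ Y_{x_i}]. Then E[ Σ_{(j,b)∈𝒴} ( f̂_{j,b} − f_{j,b} )² ] = (1/n) · ( s·p(1−p) + (2d−s)·q(1−q) ) / (p−q)², where p = e^ε/Ω and q = 1/t. -/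
open Finset

/-- The predicate: `x` is a `d`-dimensional ternary vector with exactly `s` nonzero entries. -/
def IsSparseVec (d s : ℕ) (x : Fin d → ℤ) : Prop :=
  (∀ j, x j = -1 ∨ x j = 0 ∨ x j = 1) ∧
    (Finset.univ.filter (fun j => x j ≠ 0)).card = s

/-- The domain 𝒳^s of s-sparse numerical vectors. -/
def SparseVec (d s : ℕ) := {x : Fin d → ℤ // IsSparseVec d s x}

/-- The event set Y_x ⊆ 𝒴 = [d] × {−,+}; `true` encodes `+` and `false` encodes `−`. -/
def eventSet {d s : ℕ} (x : SparseVec d s) : Finset (Fin d × Bool) :=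
  Finset.univ.filter
    (fun jb => (jb.2 = true ∧ x.1 jb.1 = 1) ∨ (jb.2 = false ∧ x.1 jb.1 = -1))

/-- Output probability `P[z | x]` of the (d,s,ε,t)-Collision mechanism with hash `H`. -/
noncomputable def collisionProb {d s t : ℕ} (ε : ℝ)
    (H : Fin d × Bool → Fin t) (x : SparseVec d s) (z : Fin t) : ℝ :=
  if z ∈ (eventSet x).image H then
    Real.exp ε / ((s : ℝ) * Real.exp ε + t - s)
  else
    (((s : ℝ) * Real.exp ε + t - s) - Real.exp ε * ((eventSet x).image H).card) /
      (((t : ℝ) - ((eventSet x).image H).card) * ((s : ℝ) * Real.exp ε + t - s))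


section Aux

variable {d s t : ℕ} {ε : ℝ}

lemma card_eventSet (x : SparseVec d s) : (eventSet x).card = s := by
  classical
  have hb : (eventSet x).card = (Finset.univ.filter (fun j => x.1 j ≠ 0)).card := by
    apply Finset.card_bij (fun jb _ => jb.1)
    · rintro ⟨j, b⟩ hjb
      simp only [eventSet, Finset.mem_filter, Finset.mem_univ, true_and] at hjb ⊢
      rcases hjb with ⟨_, h⟩ | ⟨_, h⟩ <;> simp [h]
    · rintro ⟨j, b⟩ hjb ⟨j', b'⟩ hjb' hh
      simp only [eventSet, Finset.mem_filter, Finset.mem_univ, true_and] at hjb hjb'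
      simp only at hh
      subst hh
      rcases hjb with ⟨hb, h1⟩ | ⟨hb, h1⟩ <;> rcases hjb' with ⟨hb', h1'⟩ | ⟨hb', h1'⟩ <;>
        simp_all [Prod.ext_iff]
    · intro j hj
      simp only [Finset.mem_filter, Finset.mem_univ, true_and] at hj
      rcases x.2.1 j with h | h | h
      · exact ⟨(j, false), by simp [eventSet, h], rfl⟩
      · exact absurd h hj
      · exact ⟨(j, true), by simp [eventSet, h], rfl⟩
  exact hb.trans x.2.2

lemma omegaPos (hε : 0 < ε) (hst : s < t) : 0 < (s:ℝ) * Real.exp ε + t - s := by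
  have h1 : (1:ℝ) ≤ Real.exp ε := Real.one_le_exp hε.le
  have h2 : (s:ℝ) < t := by exact_mod_cast hst
  nlinarith [Nat.cast_nonneg (α := ℝ) s]

lemma sum_collisionProb (hε : 0 < ε) (hst : s < t)
    (h : (Fin d × Bool) → Fin t) (x : SparseVec d s) :
    ∑ ζ : Fin t, collisionProb ε h x ζ = 1 := by
  classical
  have hΩ : 0 < (s:ℝ) * Real.exp ε + t - s := omegaPos hε hst
  have hm : ((eventSet x).image h).card < t :=
    lt_of_le_of_lt (le_trans Finset.card_image_le (card_eventSet x).le) hst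
  have hmt : ((((eventSet x).image h).card : ℝ)) < t := by exact_mod_cast hm
  have hne1 : ((t:ℝ)) - ((eventSet x).image h).card ≠ 0 := sub_ne_zero.mpr (ne_of_gt hmt)
  have hne2 : (s:ℝ) * Real.exp ε + t - s ≠ 0 := ne_of_gt hΩ
  unfold collisionProb
  rw [Finset.sum_ite, Finset.sum_const, Finset.sum_const, Finset.filter_univ_mem,
    Finset.filter_not, Finset.filter_univ_mem, nsmul_eq_mul, nsmul_eq_mul,
    Finset.card_sdiff_of_subset (Finset.subset_univ _), Finset.card_univ, Fintype.card_fin,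
    Nat.cast_sub hm.le]
  field_simp
  have hne3 : Real.exp ε * (s:ℝ) - s + t ≠ 0 := by intro h0; apply hne2; linarith
  linear_combination mul_inv_cancel₀ hne3

lemma collisionProb_congr {h h' : (Fin d × Bool) → Fin t} (x : SparseVec d s)
    (hh : (eventSet x).image h = (eventSet x).image h') (ζ : Fin t) :
    collisionProb ε h x ζ = collisionProb ε h' x ζ := by
  unfold collisionProb; rw [hh]

lemma card_fun_space : Fintype.card ((Fin d × Bool) → Fin t) = t ^ (2 * d) := by
  rw [Fintype.card_fun, Fintype.card_fin, Fintype.card_prod, Fintype.card_fin,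
    Fintype.card_bool, Nat.mul_comm]

lemma sum_hash_mem (x : SparseVec d s) {jb : Fin d × Bool}
    (hjb : jb ∈ eventSet x) :
    ∑ h : (Fin d × Bool) → Fin t, collisionProb ε h x (h jb)
      = (t:ℝ)^(2*d) * (Real.exp ε / ((s:ℝ) * Real.exp ε + t - s)) := by
  have key : ∀ h : (Fin d × Bool) → Fin t, collisionProb ε h x (h jb)
      = Real.exp ε / ((s:ℝ) * Real.exp ε + t - s) := fun h => by
    unfold collisionProb
    rw [if_pos (Finset.mem_image_of_mem h hjb)]
  rw [Finset.sum_congr rfl fun h _ => key h, Finset.sum_const, nsmul_eq_mul,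
    Finset.card_univ, card_fun_space]
  push_cast
  ring

lemma sum_hash_not_mem (hε : 0 < ε) (hst : s < t) (hd : 1 ≤ d) (x : SparseVec d s)
    {jb : Fin d × Bool} (hjb : jb ∉ eventSet x) :
    ∑ h : (Fin d × Bool) → Fin t, collisionProb ε h x (h jb)
      = (t:ℝ)^(2*d) * (1 / t) := by
  classical
  have ht0 : 0 < t := lt_of_le_of_lt (Nat.zero_le s) hst
  set e := (Equiv.funSplitAt jb (Fin t)) with he
  rw [← Equiv.sum_comp e.symm (fun h => collisionProb ε h x (h jb)), Fintype.sum_prod_type,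
    Finset.sum_comm]
  have happ : ∀ (ζ : Fin t) (g : { k : Fin d × Bool // k ≠ jb } → Fin t),
      (e.symm (ζ, g)) jb = ζ := by
    intro ζ g; simp [he, Equiv.funSplitAt, Equiv.piSplitAt]
  have key : ∀ g : { k : Fin d × Bool // k ≠ jb } → Fin t,
      ∑ ζ : Fin t, collisionProb ε (e.symm (ζ, g)) x ((e.symm (ζ, g)) jb) = 1 := by
    intro g
    have himg : ∀ ζ : Fin t, (eventSet x).image (e.symm (ζ, g))
        = (eventSet x).image (e.symm (⟨0, ht0⟩, g)) := by
      intro ζ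
      apply Finset.image_congr
      intro y hy
      rw [Finset.mem_coe] at hy
      have hy' : y ≠ jb := fun hyy => hjb (hyy ▸ hy)
      simp [he, Equiv.funSplitAt, Equiv.piSplitAt, hy']
    calc ∑ ζ : Fin t, collisionProb ε (e.symm (ζ, g)) x ((e.symm (ζ, g)) jb)
        = ∑ ζ : Fin t, collisionProb ε (e.symm (⟨0, ht0⟩, g)) x ζ := by
          refine Finset.sum_congr rfl fun ζ _ => ?_
          rw [happ ζ g]
          exact collisionProb_congr x (himg ζ) ζ
      _ = 1 := sum_collisionProb hε hst _ x
  rw [Finset.sum_congr rfl fun g _ => key g, Finset.sum_const, nsmul_eq_mul, mul_one,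
    Finset.card_univ, Fintype.card_fun, Fintype.card_fin]
  have hcs : Fintype.card { k : Fin d × Bool // k ≠ jb } = 2 * d - 1 := by
    rw [Fintype.card_subtype_compl, Fintype.card_subtype_eq, Fintype.card_prod,
      Fintype.card_fin, Fintype.card_bool, Nat.mul_comm]
  rw [hcs]
  have h2d : 2 * d - 1 + 1 = 2 * d := by omega
  have ht0' : ((t:ℝ)) ≠ 0 := by positivity
  rw [← h2d, pow_succ]
  push_cast
  field_simp

end Aux

section Moments

variable {d s t : ℕ} {ε : ℝ}

lemma PQ_lt (hε : 0 < ε) (hst : s < t) :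
    1 / (t:ℝ) < Real.exp ε / ((s:ℝ) * Real.exp ε + t - s) := by
  have hΩ : 0 < (s:ℝ) * Real.exp ε + t - s := omegaPos hε hst
  have ht0 : (0:ℝ) < t := by
    have : 0 < t := lt_of_le_of_lt (Nat.zero_le s) hst
    exact_mod_cast this
  have hts : (s:ℝ) < t := by exact_mod_cast hst
  have he : 1 < Real.exp ε := Real.one_lt_exp_iff.mpr hε
  rw [div_lt_div_iff₀ ht0 hΩ]
  nlinarith [mul_pos (sub_pos.mpr hts) (sub_pos.mpr he)]

lemma momentW (hε : 0 < ε) (hst : s < t) (x : SparseVec d s) :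
    ∑ h : (Fin d × Bool) → Fin t, ∑ ζ : Fin t,
      1 / (t:ℝ) ^ (2*d) * collisionProb ε h x ζ = 1 := by
  have ht0 : (0:ℝ) < t := by
    have : 0 < t := lt_of_le_of_lt (Nat.zero_le s) hst
    exact_mod_cast this
  have : ∀ h : (Fin d × Bool) → Fin t,
      ∑ ζ : Fin t, 1 / (t:ℝ) ^ (2*d) * collisionProb ε h x ζ
        = 1 / (t:ℝ) ^ (2*d) := fun h => by
    rw [← Finset.mul_sum, sum_collisionProb hε hst h x, mul_one]
  rw [Finset.sum_congr rfl fun h _ => this h, Finset.sum_const, nsmul_eq_mul,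
    Finset.card_univ, card_fun_space]
  push_cast
  field_simp

lemma momentWX (hε : 0 < ε) (hst : s < t) (hd : 1 ≤ d) (x : SparseVec d s)
    (jb : Fin d × Bool) :
    ∑ h : (Fin d × Bool) → Fin t, ∑ ζ : Fin t,
      (1 / (t:ℝ) ^ (2*d) * collisionProb ε h x ζ) * (if h jb = ζ then (1:ℝ) else 0)
      = if jb ∈ eventSet x then Real.exp ε / ((s:ℝ) * Real.exp ε + t - s)
        else 1 / (t:ℝ) := by
  have ht0 : (0:ℝ) < t := by
    have : 0 < t := lt_of_le_of_lt (Nat.zero_le s) hst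
    exact_mod_cast this
  have hinner : ∀ h : (Fin d × Bool) → Fin t,
      ∑ ζ : Fin t, (1 / (t:ℝ) ^ (2*d) * collisionProb ε h x ζ) *
        (if h jb = ζ then (1:ℝ) else 0)
      = 1 / (t:ℝ) ^ (2*d) * collisionProb ε h x (h jb) := fun h => by
    rw [Finset.sum_congr rfl (fun ζ _ => by
      rw [mul_ite, mul_one, mul_zero]), Finset.sum_ite_eq, if_pos (Finset.mem_univ _)]
  rw [Finset.sum_congr rfl fun h _ => hinner h, ← Finset.mul_sum]
  by_cases hjb : jb ∈ eventSet x
  · rw [sum_hash_mem x hjb, if_pos hjb]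
    field_simp
  · rw [sum_hash_not_mem hε hst hd x hjb, if_neg hjb]
    field_simp

end Moments

section L23

variable {d s t : ℕ} {ε : ℝ}

lemma momentA_one (hε : 0 < ε) (hst : s < t) (hd : 1 ≤ d) (x : SparseVec d s)
    (jb : Fin d × Bool) :
    ∑ h : (Fin d × Bool) → Fin t, ∑ ζ : Fin t,
      (1 / (t:ℝ) ^ (2*d) * collisionProb ε h x ζ) *
        (((if h jb = ζ then (1:ℝ) else 0) - 1 / (t:ℝ)) /
            (Real.exp ε / ((s:ℝ) * Real.exp ε + t - s) - 1 / (t:ℝ)) -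
          (if jb ∈ eventSet x then (1:ℝ) else 0)) = 0 := by
  set P := Real.exp ε / ((s:ℝ) * Real.exp ε + t - s) with hP
  set Q := 1 / (t:ℝ) with hQ
  have hPQ : Q < P := PQ_lt hε hst
  have hPQ' : P - Q ≠ 0 := sub_ne_zero.mpr (ne_of_gt hPQ)
  clear_value P Q
  set b : ℝ := if jb ∈ eventSet x then (1:ℝ) else 0 with hb
  clear_value b
  have expand : ∀ (h : (Fin d × Bool) → Fin t) (ζ : Fin t),
      (1 / (t:ℝ) ^ (2*d) * collisionProb ε h x ζ) *
        (((if h jb = ζ then (1:ℝ) else 0) - Q) / (P - Q) - b)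
      = ((1 / (t:ℝ) ^ (2*d) * collisionProb ε h x ζ) *
          (if h jb = ζ then (1:ℝ) else 0)) * (P - Q)⁻¹ +
        (1 / (t:ℝ) ^ (2*d) * collisionProb ε h x ζ) * (-(Q * (P - Q)⁻¹) - b) := by
    intro h ζ
    ring
  simp only [expand, Finset.sum_add_distrib, ← Finset.sum_mul]
  rw [momentWX hε hst hd x jb, momentW hε hst x, ← hP, ← hQ, one_mul]
  by_cases hjb : jb ∈ eventSet x
  · rw [if_pos hjb]
    simp only [hb, if_pos hjb]
    field_simp
    try ring
  · rw [if_neg hjb]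
    simp only [hb, if_neg hjb]
    field_simp
    try ring

lemma momentA_two (hε : 0 < ε) (hst : s < t) (hd : 1 ≤ d) (x : SparseVec d s)
    (jb : Fin d × Bool) :
    ∑ h : (Fin d × Bool) → Fin t, ∑ ζ : Fin t,
      (1 / (t:ℝ) ^ (2*d) * collisionProb ε h x ζ) *
        (((if h jb = ζ then (1:ℝ) else 0) - 1 / (t:ℝ)) /
            (Real.exp ε / ((s:ℝ) * Real.exp ε + t - s) - 1 / (t:ℝ)) -
          (if jb ∈ eventSet x then (1:ℝ) else 0)) ^ 2
      = (if jb ∈ eventSet x then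
          (Real.exp ε / ((s:ℝ) * Real.exp ε + t - s)) *
            (1 - Real.exp ε / ((s:ℝ) * Real.exp ε + t - s))
        else (1 / (t:ℝ)) * (1 - 1 / (t:ℝ))) /
        (Real.exp ε / ((s:ℝ) * Real.exp ε + t - s) - 1 / (t:ℝ)) ^ 2 := by
  set P := Real.exp ε / ((s:ℝ) * Real.exp ε + t - s) with hP
  set Q := 1 / (t:ℝ) with hQ
  have hPQ : Q < P := PQ_lt hε hst
  have hPQ' : P - Q ≠ 0 := sub_ne_zero.mpr (ne_of_gt hPQ)
  clear_value P Q
  set b : ℝ := if jb ∈ eventSet x then (1:ℝ) else 0 with hb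
  clear_value b
  set k1 : ℝ := (1 - 2*Q) * ((P - Q)⁻¹)^2 - 2*b * (P - Q)⁻¹ with hk1
  set k0 : ℝ := Q^2 * ((P - Q)⁻¹)^2 + 2*b*Q * (P - Q)⁻¹ + b^2 with hk0
  clear_value k1 k0
  have scalar : ∀ X : ℝ, X * X = X →
      ((X - Q) / (P - Q) - b) ^ 2 = X * k1 + k0 := by
    intro X hX
    rw [hk1, hk0]
    linear_combination ((P - Q)⁻¹ ^ 2) * hX
  have expand : ∀ (h : (Fin d × Bool) → Fin t) (ζ : Fin t),
      (1 / (t:ℝ) ^ (2*d) * collisionProb ε h x ζ) *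
        (((if h jb = ζ then (1:ℝ) else 0) - Q) / (P - Q) - b) ^ 2
      = ((1 / (t:ℝ) ^ (2*d) * collisionProb ε h x ζ) *
          (if h jb = ζ then (1:ℝ) else 0)) * k1 +
        (1 / (t:ℝ) ^ (2*d) * collisionProb ε h x ζ) * k0 := by
    intro h ζ
    by_cases hx : h jb = ζ
    · rw [if_pos hx, scalar 1 (by norm_num)]
      ring
    · rw [if_neg hx, scalar 0 (by norm_num)]
      ring
  simp only [expand, Finset.sum_add_distrib, ← Finset.sum_mul]
  rw [momentWX hε hst hd x jb, momentW hε hst x, ← hP, ← hQ, one_mul]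
  by_cases hjb : jb ∈ eventSet x
  · rw [if_pos hjb, if_pos hjb, hk1, hk0]
    simp only [hb, if_pos hjb]
    field_simp
    ring
  · rw [if_neg hjb, if_neg hjb, hk1, hk0]
    simp only [hb, if_neg hjb]
    field_simp
    ring

lemma sum_sum_prod_eq {n : ℕ} {B C : Type*} [Fintype B] [Fintype C]
    (g : Fin n → B → C → ℝ) :
    ∑ H : Fin n → B, ∑ z : Fin n → C, ∏ m, g m (H m) (z m)
      = ∏ m, ∑ b : B, ∑ c : C, g m b c := by
  classical
  rw [Fintype.prod_sum fun m b => ∑ c : C, g m b c]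
  exact Finset.sum_congr rfl fun H _ => (Fintype.prod_sum fun m c => g m (H m) c).symm

end L23

section Core

lemma sum_rot {α β γ : Type*} [Fintype α] [Fintype β] [Fintype γ] (f : α → β → γ → ℝ) :
    ∑ a : α, ∑ b : β, ∑ c : γ, f a b c = ∑ c : γ, ∑ a : α, ∑ b : β, f a b c :=
  (Finset.sum_congr rfl fun _ _ => Finset.sum_comm).trans Finset.sum_comm

lemma mse_core {n : ℕ} {B C J : Type*} [Fintype B] [Fintype C] [Fintype J]
    (W : Fin n → B → C → ℝ) (A : Fin n → J → B → C → ℝ) (V : Fin n → J → ℝ)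
    (hW : ∀ i, ∑ b : B, ∑ c : C, W i b c = 1)
    (hA1 : ∀ i j, ∑ b : B, ∑ c : C, W i b c * A i j b c = 0)
    (hA2 : ∀ i j, ∑ b : B, ∑ c : C, W i b c * (A i j b c) ^ 2 = V i j) :
    ∑ H : Fin n → B, ∑ z : Fin n → C,
      (∏ i, W i (H i) (z i)) * (∑ j : J, ((1 / (n:ℝ)) * ∑ i, A i j (H i) (z i)) ^ 2)
    = (1 / (n:ℝ)) ^ 2 * ∑ j : J, ∑ i, V i j := by
  classical
  have expand2 : ∀ (c Wp : ℝ) (f : Fin n → ℝ),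
      ∑ i, ∑ k, c * (Wp * (f i * f k)) = Wp * (c * ((∑ i, f i) * (∑ i, f i))) := by
    intro c Wp f
    calc ∑ i, ∑ k, c * (Wp * (f i * f k))
        = ∑ i, ∑ k, (Wp * c) * (f i * f k) :=
          Finset.sum_congr rfl fun i _ => Finset.sum_congr rfl fun k _ => by ring
      _ = (Wp * c) * ∑ i, ∑ k, f i * f k := by simp only [← Finset.mul_sum]
      _ = (Wp * c) * ((∑ i, f i) * (∑ i, f i)) := by rw [← Finset.sum_mul_sum]
      _ = Wp * (c * ((∑ i, f i) * (∑ i, f i))) := by ring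
  have inner : ∀ (H : Fin n → B) (z : Fin n → C),
      (∏ i, W i (H i) (z i)) * (∑ j : J, ((1 / (n:ℝ)) * ∑ i, A i j (H i) (z i)) ^ 2)
      = ∑ j : J, ∑ i, ∑ k, (1 / (n:ℝ)) ^ 2 *
          ((∏ m, W m (H m) (z m)) * (A i j (H i) (z i) * A k j (H k) (z k))) := by
    intro H z
    rw [Finset.mul_sum]
    refine Finset.sum_congr rfl fun j _ => ?_
    rw [expand2 ((1 / (n:ℝ)) ^ 2) (∏ m, W m (H m) (z m)) (fun i => A i j (H i) (z i))]
    ring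
  rw [Finset.sum_congr rfl fun H _ => Finset.sum_congr rfl fun z _ => inner H z, sum_rot]
  have hT : ∀ (j : J) (i k : Fin n),
      (∑ H : Fin n → B, ∑ z : Fin n → C,
        (∏ m, W m (H m) (z m)) * (A i j (H i) (z i) * A k j (H k) (z k)))
      = if i = k then V i j else 0 := by
    intro j i k
    have hg : ∀ (H : Fin n → B) (z : Fin n → C),
        (∏ m, W m (H m) (z m)) * (A i j (H i) (z i) * A k j (H k) (z k))
        = ∏ m, (W m (H m) (z m) *
            ((if m = i then A i j (H m) (z m) else 1) *
             (if m = k then A k j (H m) (z m) else 1))) := by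
      intro H z
      rw [Finset.prod_mul_distrib, Finset.prod_mul_distrib,
        Finset.prod_ite_eq' Finset.univ i (fun m => A i j (H m) (z m)),
        Finset.prod_ite_eq' Finset.univ k (fun m => A k j (H m) (z m)),
        if_pos (Finset.mem_univ i), if_pos (Finset.mem_univ k)]
    rw [Finset.sum_congr rfl fun H _ => Finset.sum_congr rfl fun z _ => hg H z,
      sum_sum_prod_eq (fun m b c => W m b c *
        ((if m = i then A i j b c else 1) * (if m = k then A k j b c else 1)))]
    by_cases hik : i = k
    · subst hik
      rw [if_pos rfl]
      rw [Finset.prod_eq_single i (fun m _ hm => by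
            simp only [if_neg hm, mul_one]
            exact hW m)
          (fun hi => absurd (Finset.mem_univ i) hi)]
      simp only [eq_self_iff_true, if_true]
      rw [← hA2 i j]
      exact Finset.sum_congr rfl fun b _ => Finset.sum_congr rfl fun c _ => by ring
    · rw [if_neg hik]
      apply Finset.prod_eq_zero (Finset.mem_univ i)
      simp only [eq_self_iff_true, if_true, if_neg hik, mul_one]
      exact hA1 i j
  have perj : ∀ j : J,
      ∑ H : Fin n → B, ∑ z : Fin n → C, ∑ i, ∑ k, (1 / (n:ℝ)) ^ 2 *
          ((∏ m, W m (H m) (z m)) * (A i j (H i) (z i) * A k j (H k) (z k)))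
      = (1 / (n:ℝ)) ^ 2 * ∑ i, V i j := by
    intro j
    rw [sum_rot]
    have perji : ∀ i : Fin n,
        ∑ H : Fin n → B, ∑ z : Fin n → C, ∑ k, (1 / (n:ℝ)) ^ 2 *
            ((∏ m, W m (H m) (z m)) * (A i j (H i) (z i) * A k j (H k) (z k)))
        = (1 / (n:ℝ)) ^ 2 * V i j := by
      intro i
      rw [sum_rot]
      have perk : ∀ k : Fin n,
          ∑ H : Fin n → B, ∑ z : Fin n → C, (1 / (n:ℝ)) ^ 2 *
              ((∏ m, W m (H m) (z m)) * (A i j (H i) (z i) * A k j (H k) (z k)))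
          = (1 / (n:ℝ)) ^ 2 * (if i = k then V i j else 0) := by
        intro k
        simp only [← Finset.mul_sum]
        rw [hT j i k]
      rw [Finset.sum_congr rfl fun k _ => perk k, ← Finset.mul_sum]
      congr 1
      simp [Finset.sum_ite_eq]
    rw [Finset.sum_congr rfl fun i _ => perji i, ← Finset.mul_sum]
  rw [Finset.sum_congr rfl fun j _ => perj j, ← Finset.mul_sum]

end Core

/-- exact mean squared error of the Collision frequency estimator for `n` users.
Each user `i` independently draws a uniformly random hash `H^i : 𝒴 → [t]` and an output
`z^i` from the Collision mechanism on `x_i` with hash `H^i`; the expectation below is over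
this joint randomness. With `p = e^ε/Ω` and `q = 1/t`,
`E[Σ_{(j,b)} (f̂_{j,b} − f_{j,b})²] = (1/n)·(s·p(1−p) + (2d−s)·q(1−q))/(p−q)²`. -/
theorem collision_frequency_mse (ε : ℝ) (hε : 0 < ε) (n d s t : ℕ)
    (hn : 1 ≤ n) (hs : 1 ≤ s) (hsd : s ≤ d) (hst : s < t)
    (x : Fin n → SparseVec d s) :
    (∑ H : Fin n → ((Fin d × Bool) → Fin t), ∑ z : Fin n → Fin t,
        (∏ i, (1 / (t : ℝ) ^ (2 * d)) * collisionProb ε (H i) (x i) (z i)) *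
          (∑ jb : Fin d × Bool,
            ((1 / (n : ℝ)) * ∑ i,
                ((if H i jb = z i then (1 : ℝ) else 0) - 1 / (t : ℝ)) /
                  (Real.exp ε / ((s : ℝ) * Real.exp ε + t - s) - 1 / (t : ℝ)) -
              (1 / (n : ℝ)) * ∑ i, (if jb ∈ eventSet (x i) then (1 : ℝ) else 0)) ^ 2)) =
      (1 / (n : ℝ)) *
        ((s : ℝ) * (Real.exp ε / ((s : ℝ) * Real.exp ε + t - s)) *
            (1 - Real.exp ε / ((s : ℝ) * Real.exp ε + t - s)) +
          (2 * (d : ℝ) - s) * (1 / (t : ℝ)) * (1 - 1 / (t : ℝ))) /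
        (Real.exp ε / ((s : ℝ) * Real.exp ε + t - s) - 1 / (t : ℝ)) ^ 2 := by
  classical
  have hd : 1 ≤ d := le_trans hs hsd
  have hn0 : ((n:ℝ)) ≠ 0 := Nat.cast_ne_zero.mpr (by omega)
  have key := mse_core
    (fun i h ζ => 1 / (t : ℝ) ^ (2 * d) * collisionProb ε h (x i) ζ)
    (fun i jb h ζ =>
      ((if h jb = ζ then (1 : ℝ) else 0) - 1 / (t : ℝ)) /
          (Real.exp ε / ((s : ℝ) * Real.exp ε + t - s) - 1 / (t : ℝ)) -
        (if jb ∈ eventSet (x i) then (1 : ℝ) else 0))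
    (fun i jb =>
      (if jb ∈ eventSet (x i) then
          (Real.exp ε / ((s : ℝ) * Real.exp ε + t - s)) *
            (1 - Real.exp ε / ((s : ℝ) * Real.exp ε + t - s))
        else (1 / (t : ℝ)) * (1 - 1 / (t : ℝ))) /
        (Real.exp ε / ((s : ℝ) * Real.exp ε + t - s) - 1 / (t : ℝ)) ^ 2)
    (fun i => momentW hε hst (x i))
    (fun i jb => momentA_one hε hst hd (x i) jb)
    (fun i jb => momentA_two hε hst hd (x i) jb)
  simp only [← mul_sub, ← Finset.sum_sub_distrib]
  refine key.trans ?_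
  -- evaluate the double sum of variances
  have hVsum : ∀ i : Fin n, (∑ jb : Fin d × Bool,
      (if jb ∈ eventSet (x i) then
          (Real.exp ε / ((s : ℝ) * Real.exp ε + t - s)) *
            (1 - Real.exp ε / ((s : ℝ) * Real.exp ε + t - s))
        else (1 / (t : ℝ)) * (1 - 1 / (t : ℝ))) /
        (Real.exp ε / ((s : ℝ) * Real.exp ε + t - s) - 1 / (t : ℝ)) ^ 2)
      = ((s : ℝ) * ((Real.exp ε / ((s : ℝ) * Real.exp ε + t - s)) *
            (1 - Real.exp ε / ((s : ℝ) * Real.exp ε + t - s))) +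
          (2 * (d : ℝ) - s) * ((1 / (t : ℝ)) * (1 - 1 / (t : ℝ)))) /
        (Real.exp ε / ((s : ℝ) * Real.exp ε + t - s) - 1 / (t : ℝ)) ^ 2 := by
    intro i
    rw [← Finset.sum_div]
    congr 1
    rw [Finset.sum_ite, Finset.sum_const, Finset.sum_const, Finset.filter_univ_mem,
      Finset.filter_not, Finset.filter_univ_mem, Finset.card_sdiff_of_subset (Finset.subset_univ _),
      Finset.card_univ, card_eventSet (x i), nsmul_eq_mul, nsmul_eq_mul]
    have hcard : Fintype.card (Fin d × Bool) = 2 * d := by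
      rw [Fintype.card_prod, Fintype.card_fin, Fintype.card_bool, Nat.mul_comm]
    rw [hcard, Nat.cast_sub (by omega : s ≤ 2 * d)]
    push_cast
    ring
  rw [Finset.sum_comm, Finset.sum_congr rfl fun i _ => hVsum i, Finset.sum_const,
    Finset.card_univ, Fintype.card_fin, nsmul_eq_mul]
  have hns : (1 / (n:ℝ)) ^ 2 * (n:ℝ) = 1 / (n:ℝ) := by field_simp
  rw [← mul_assoc, hns, mul_div_assoc']
  congr 1
  ring
end

section
/- Let ε > 0 be real, let d ≥ s ≥ 1 and t ≥ 2s be integers, let 𝓗 be a finite family of hash functions 𝒴 → [t] with probability distribution P_𝓗, and let x_1, x_1', x_2, …, x_n ∈ 𝒳^s. Assume every H ∈ 𝓗 is injective on each of the sets Y_{x_1}, Y_{x_1'}, Y_{x_2}, …, Y_{x_n}. Let R denote the randomized-hash Collision randomizer, and set β = Σ_{H∈𝓗} P_𝓗(H) · ( s − |H(Y_{x_1}) ∩ H(Y_{x_1'})| ) / (s·e^ε + t − s). Then 0 ≤ β, β + e^ε·β ≤ 1, 2β ≤ 1, and there exist probability distributions Q_1, Q_1', Q_1^*, Q_2, …,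 Q_n on 𝓗 × [t] such that R(x_1) = e^ε·β·Q_1 + β·Q_1' + (1 − β − e^ε·β)·Q_1^*, R(x_1') = β·Q_1 + e^ε·β·Q_1' + (1 − β − e^ε·β)·Q_1^*, and R(x_i) = β·Q_1 + β·Q_1' + (1 − 2β)·Q_i for every i ∈ {2,…,n}. -/
open Finset

/-- The randomized-hash Collision randomizer: given a finite hash family indexed by `Fin m`
with distribution `PH`, input `x` is mapped to the distribution of the pair `(H, z)` where
`H ∼ PH` and, given `H`, `z` is drawn from the Collision mechanism on `x` with hash `H`. -/
noncomputable def collisionRand {d s t : ℕ} (ε : ℝ) (m : ℕ)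
    (Hfam : Fin m → (Fin d × Bool → Fin t)) (PH : Fin m → ℝ)
    (x : SparseVec d s) : Fin m × Fin t → ℝ :=
  fun hz => PH hz.1 * collisionProb ε (Hfam hz.1) x hz.2

lemma eventSet_card {d s : ℕ} (x : SparseVec d s) : (eventSet x).card = s := by
  obtain ⟨h1, h2⟩ := x.2
  refine Eq.trans ?_ h2
  apply Finset.card_bij (fun a _ => a.1)
  · intro a ha
    simp only [eventSet, mem_filter, mem_univ, true_and] at ha
    simp only [mem_filter, mem_univ, true_and]
    rcases ha with ⟨_, h⟩ | ⟨_, h⟩ <;> simp [h]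
  · intro a ha b hb hab
    simp only [eventSet, mem_filter, mem_univ, true_and] at ha hb
    have : a.2 = b.2 := by
      rcases ha with ⟨ha2, ha3⟩ | ⟨ha2, ha3⟩ <;> rcases hb with ⟨hb2, hb3⟩ | ⟨hb2, hb3⟩ <;>
        rw [ha2, hb2] <;> rw [hab] at ha3 <;> omega
    exact Prod.ext hab this
  · intro b hb
    simp only [mem_filter, mem_univ, true_and] at hb
    rcases h1 b with h | h | h
    · exact ⟨(b, false), by simp [eventSet, h], rfl⟩
    · exact absurd h hb
    · exact ⟨(b, true), by simp [eventSet, h], rfl⟩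

lemma collisionProb_eq {d s t : ℕ} (ε : ℝ) (hε : 0 < ε) (hs : 1 ≤ s) (hst : s < t)
    (H : Fin d × Bool → Fin t) (x : SparseVec d s)
    (hinj : Set.InjOn H (eventSet x : Set (Fin d × Bool))) (z : Fin t) :
    collisionProb ε H x z =
      if z ∈ (eventSet x).image H then Real.exp ε / ((s:ℝ)*Real.exp ε + t - s)
      else 1 / ((s:ℝ)*Real.exp ε + t - s) := by
  have hcard : ((eventSet x).image H).card = s := by
    rw [Finset.card_image_of_injOn hinj, eventSet_card]
  have hE1 : (1:ℝ) < Real.exp ε := by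
    calc (1:ℝ) = Real.exp 0 := by simp
    _ < Real.exp ε := Real.exp_lt_exp.mpr hε
  have hts : (0:ℝ) < (t:ℝ) - s := by
    have : (s:ℝ) < t := by exact_mod_cast hst
    linarith
  have hΩ : (0:ℝ) < (s:ℝ)*Real.exp ε + t - s := by
    have hs' : (1:ℝ) ≤ s := by exact_mod_cast hs
    nlinarith
  unfold collisionProb
  rw [hcard]
  split
  · rfl
  · rw [div_eq_div_iff (by positivity) hΩ.ne']
    ring

lemma sum_ite_card {t : ℕ} (S : Finset (Fin t)) (a b : ℝ) :
    ∑ z : Fin t, (if z ∈ S then a else b) = S.card * a + ((t:ℝ) - S.card) * b := by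
  rw [Finset.sum_ite]
  simp only [Finset.sum_const, Finset.filter_mem_eq_inter, Finset.univ_inter, nsmul_eq_mul]
  congr 1
  have : Finset.filter (fun z => z ∉ S) Finset.univ = Sᶜ := by
    ext z; simp
  rw [this, Finset.card_compl]
  have hle : S.card ≤ t := by simpa using Finset.card_le_card (Finset.subset_univ S)
  simp [Nat.cast_sub hle]

set_option maxHeartbeats 2000000 in
/-- mixture property of the randomized-hash Collision randomizer.  If every
hash in the family is injective on the event sets of all the data, then with
`β = Σ_H P_𝓗(H)·(s − |H(Y_{x₁}) ∩ H(Y_{x₁'})|)/(s·e^ε + t − s)` one has `0 ≤ β`,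
`β + e^ε·β ≤ 1`, `2β ≤ 1`, and there are probability distributions `Q₁, Q₁', Q₁*, Q₂,…,Qₙ`
decomposing `R(x₁), R(x₁'), R(x_i)` as stated. -/
theorem collision_mixture_property (ε : ℝ) (hε : 0 < ε) (n d s t : ℕ)
    (hn : 1 ≤ n) (hs : 1 ≤ s) (hsd : s ≤ d) (ht : 2 * s ≤ t)
    (m : ℕ) (Hfam : Fin m → (Fin d × Bool → Fin t)) (PH : Fin m → ℝ)
    (hPH0 : ∀ h, 0 ≤ PH h) (hPH1 : ∑ h, PH h = 1)
    (x1 x1' : SparseVec d s) (xs : Fin n → SparseVec d s) (hx1 : xs ⟨0, hn⟩ = x1)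
    (hinj : ∀ h : Fin m,
      Set.InjOn (Hfam h) (eventSet x1 : Set (Fin d × Bool)) ∧
      Set.InjOn (Hfam h) (eventSet x1' : Set (Fin d × Bool)) ∧
      ∀ i : Fin n, Set.InjOn (Hfam h) (eventSet (xs i) : Set (Fin d × Bool))) :
    0 ≤ (∑ h, PH h *
        (((s : ℝ) - (((eventSet x1).image (Hfam h) ∩ (eventSet x1').image (Hfam h)).card : ℝ)) /
          ((s : ℝ) * Real.exp ε + t - s))) ∧
    (let β : ℝ := ∑ h, PH h *
        (((s : ℝ) - (((eventSet x1).image (Hfam h) ∩ (eventSet x1').image (Hfam h)).card : ℝ)) /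
          ((s : ℝ) * Real.exp ε + t - s));
     β + Real.exp ε * β ≤ 1 ∧ 2 * β ≤ 1 ∧
     ∃ Q1 Q1' Q1s : Fin m × Fin t → ℝ, ∃ Qi : Fin n → (Fin m × Fin t → ℝ),
       ((∀ u, 0 ≤ Q1 u) ∧ ∑ u, Q1 u = 1) ∧
       ((∀ u, 0 ≤ Q1' u) ∧ ∑ u, Q1' u = 1) ∧
       ((∀ u, 0 ≤ Q1s u) ∧ ∑ u, Q1s u = 1) ∧
       (∀ i, (∀ u, 0 ≤ Qi i u) ∧ ∑ u, Qi i u = 1) ∧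
       (∀ u, collisionRand ε m Hfam PH x1 u =
          Real.exp ε * β * Q1 u + β * Q1' u + (1 - β - Real.exp ε * β) * Q1s u) ∧
       (∀ u, collisionRand ε m Hfam PH x1' u =
          β * Q1 u + Real.exp ε * β * Q1' u + (1 - β - Real.exp ε * β) * Q1s u) ∧
       (∀ i : Fin n, i ≠ ⟨0, hn⟩ → ∀ u, collisionRand ε m Hfam PH (xs i) u =
          β * Q1 u + β * Q1' u + (1 - 2 * β) * Qi i u)) := by
  classical
  have hE1 : (1:ℝ) < Real.exp ε := by
    calc (1:ℝ) = Real.exp 0 := by simp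
    _ < Real.exp ε := Real.exp_lt_exp.mpr hε
  have hst : s < t := by omega
  have hs' : (1:ℝ) ≤ s := by exact_mod_cast hs
  have hts : (s:ℝ) < t := by exact_mod_cast hst
  have h2s : 2 * (s:ℝ) ≤ t := by exact_mod_cast ht
  set E := Real.exp ε with hEdef
  have hE0 : (0:ℝ) < E := by linarith
  have hΩpos : (0:ℝ) < (s:ℝ) * E + t - s := by
    nlinarith [mul_pos (show (0:ℝ) < (s:ℝ) by linarith) hE0]
  set Ω := (s:ℝ) * E + t - s with hΩdef
  set β : ℝ := ∑ h, PH h *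
      (((s : ℝ) - (((eventSet x1).image (Hfam h) ∩ (eventSet x1').image (Hfam h)).card : ℝ)) / Ω)
    with hβdef
  set A : Fin m → Finset (Fin t) := fun h => (eventSet x1).image (Hfam h) with hAdef
  set B : Fin m → Finset (Fin t) := fun h => (eventSet x1').image (Hfam h) with hBdef
  set c : Fin m → ℝ := fun h => ((A h ∩ B h).card : ℝ) with hcdef
  have hβexp : β = ∑ h, PH h * (((s:ℝ) - c h) / Ω) := hβdef
  -- basic cardinalities
  have cardA : ∀ h, (A h).card = s := fun h => by
    show ((eventSet x1).image (Hfam h)).card = s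
    rw [Finset.card_image_of_injOn (hinj h).1, eventSet_card]
  have cardB : ∀ h, (B h).card = s := fun h => by
    show ((eventSet x1').image (Hfam h)).card = s
    rw [Finset.card_image_of_injOn (hinj h).2.1, eventSet_card]
  have hc0 : ∀ h, 0 ≤ c h := fun h => by positivity
  have hcs : ∀ h, c h ≤ s := fun h => by
    have := Finset.card_le_card (Finset.inter_subset_left : A h ∩ B h ⊆ A h)
    rw [cardA h] at this
    show ((A h ∩ B h).card : ℝ) ≤ (s:ℝ)
    exact_mod_cast this
  have cardAdB : ∀ h, ((A h \ B h).card : ℝ) = s - c h := by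
    intro h
    have h1 := Finset.card_sdiff_add_card_inter (A h) (B h)
    rw [cardA h] at h1
    have h2 := congrArg (Nat.cast : ℕ → ℝ) h1
    push_cast at h2
    show ((A h \ B h).card : ℝ) = (s:ℝ) - ((A h ∩ B h).card : ℝ)
    linarith
  have cardBdA : ∀ h, ((B h \ A h).card : ℝ) = s - c h := by
    intro h
    have h1 := Finset.card_sdiff_add_card_inter (B h) (A h)
    rw [cardB h, Finset.inter_comm] at h1
    have h2 := congrArg (Nat.cast : ℕ → ℝ) h1
    push_cast at h2
    show ((B h \ A h).card : ℝ) = (s:ℝ) - ((A h ∩ B h).card : ℝ)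
    linarith
  have cardU : ∀ h, ((A h ∪ B h).card : ℝ) = 2*s - c h := by
    intro h
    have h1 := Finset.card_union_add_card_inter (A h) (B h)
    rw [cardA h, cardB h] at h1
    have h2 := congrArg (Nat.cast : ℕ → ℝ) h1
    push_cast at h2
    show ((A h ∪ B h).card : ℝ) = 2*(s:ℝ) - ((A h ∩ B h).card : ℝ)
    linarith
  have cardUc : ∀ h, (((A h ∪ B h)ᶜ).card : ℝ) = (t:ℝ) - (2*s - c h) := by
    intro h
    rw [Finset.card_compl]
    have hle : (A h ∪ B h).card ≤ Fintype.card (Fin t) := Finset.card_le_univ _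
    rw [Nat.cast_sub hle, cardU h]
    simp
  -- β facts
  have hβh0 : ∀ h, 0 ≤ ((s:ℝ) - c h) / Ω := fun h =>
    div_nonneg (by linarith [hcs h]) hΩpos.le
  have hβh1 : ∀ h, (1+E) * (((s:ℝ) - c h) / Ω) ≤ 1 := by
    intro h
    rw [← mul_div_assoc, div_le_one hΩpos, hΩdef]
    nlinarith [hc0 h, hcs h, mul_nonneg (hc0 h) hE0.le]
  have hβ0 : 0 ≤ β := by
    rw [hβexp]
    exact Finset.sum_nonneg fun h _ => mul_nonneg (hPH0 h) (hβh0 h)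
  have hβE : (1+E) * β ≤ 1 := by
    rw [hβexp, Finset.mul_sum]
    calc ∑ h, (1+E) * (PH h * (((s:ℝ) - c h) / Ω))
        ≤ ∑ h, PH h * 1 := by
          apply Finset.sum_le_sum
          intro h _
          have e : (1+E) * (PH h * (((s:ℝ) - c h) / Ω))
              = PH h * ((1+E) * (((s:ℝ) - c h) / Ω)) := by ring
          rw [e]
          exact mul_le_mul_of_nonneg_left (hβh1 h) (hPH0 h)
      _ = 1 := by simp [hPH1]
  have h2β : 2 * β ≤ 1 := by nlinarith
  have h2βpos : 0 < 1 - 2*β := by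
    rcases eq_or_lt_of_le hβ0 with h|h
    · rw [← h]; norm_num
    · have : 2*β < (1+E)*β := by nlinarith
      linarith
  have hγ0 : 0 ≤ 1 - β - E*β := by nlinarith
  -- uniform distribution
  have hm : 0 < m := by
    rcases Nat.eq_zero_or_pos m with h|h
    · subst h; simp at hPH1
    · exact h
  have htpos : 0 < t := by omega
  set unif : Fin m × Fin t → ℝ := fun _ => 1 / ((m:ℝ) * t) with hunifdef
  have hunif0 : ∀ u, 0 ≤ unif u := fun u => by
    show (0:ℝ) ≤ 1 / ((m:ℝ) * t)
    positivity
  have hunifsum : ∑ u : Fin m × Fin t, unif u = 1 := by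
    show ∑ _u : Fin m × Fin t, (1:ℝ) / ((m:ℝ) * t) = 1
    rw [Finset.sum_const, Finset.card_univ, Fintype.card_prod,
      Fintype.card_fin, Fintype.card_fin, nsmul_eq_mul]
    have hm' : (m:ℝ) ≠ 0 := by positivity
    have ht' : (t:ℝ) ≠ 0 := by positivity
    push_cast
    field_simp
  -- indicators and remainder
  set ind1 : Fin m × Fin t → ℝ := fun u => if u.2 ∈ A u.1 \ B u.1 then 1/Ω else 0 with hind1
  set ind2 : Fin m × Fin t → ℝ := fun u => if u.2 ∈ B u.1 \ A u.1 then 1/Ω else 0 with hind2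
  set rem : Fin m × Fin t → ℝ := fun u =>
    PH u.1 * (if u.2 ∈ A u.1 ∩ B u.1 then E/Ω else if u.2 ∈ A u.1 ∪ B u.1 then 0 else 1/Ω)
    with hremdef
  have hind1_0 : ∀ u, 0 ≤ ind1 u := fun u => by
    simp only [hind1]; split <;> positivity
  have hind2_0 : ∀ u, 0 ≤ ind2 u := fun u => by
    simp only [hind2]; split <;> positivity
  have hrem0 : ∀ u, 0 ≤ rem u := by
    intro u
    simp only [hremdef]
    have := hPH0 u.1
    split_ifs <;> positivity
  -- sums of indicators
  have hind1sum : ∀ h, ∑ z, ind1 (h, z) = ((s:ℝ) - c h) / Ω := by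
    intro h
    simp only [hind1]
    rw [sum_ite_card, cardAdB h]; ring
  have hind2sum : ∀ h, ∑ z, ind2 (h, z) = ((s:ℝ) - c h) / Ω := by
    intro h
    simp only [hind2]
    rw [sum_ite_card, cardBdA h]; ring
  have hremsum : ∑ u, rem u = 1 - β - E*β := by
    rw [Fintype.sum_prod_type]
    have key : ∀ h, ∑ z, rem (h, z) = PH h * (1 - (1+E) * (((s:ℝ) - c h) / Ω)) := by
      intro h
      simp only [hremdef]
      rw [← Finset.mul_sum]
      congr 1
      have e1 : ∀ z : Fin t,
          (if z ∈ A h ∩ B h then E/Ω else if z ∈ A h ∪ B h then 0 else 1/Ω)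
          = (if z ∈ A h ∩ B h then E/Ω else 0) + (if z ∈ (A h ∪ B h)ᶜ then 1/Ω else 0) := by
        intro z
        by_cases h1 : z ∈ A h ∩ B h <;> by_cases h2 : z ∈ A h ∪ B h
        · have h3 : z ∉ (A h ∪ B h)ᶜ := fun hc => (Finset.mem_compl.mp hc) h2
          rw [if_pos h1, if_pos h1, if_neg h3]; ring
        · exact absurd (Finset.mem_union_left _ (Finset.mem_inter.mp h1).1) h2
        · have h3 : z ∉ (A h ∪ B h)ᶜ := fun hc => (Finset.mem_compl.mp hc) h2
          rw [if_neg h1, if_pos h2, if_neg h1, if_neg h3]; ring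
        · have h3 : z ∈ (A h ∪ B h)ᶜ := Finset.mem_compl.mpr h2
          rw [if_neg h1, if_neg h2, if_neg h1, if_pos h3]; ring
      rw [Finset.sum_congr rfl (fun z _ => e1 z), Finset.sum_add_distrib,
        sum_ite_card, sum_ite_card, cardUc h]
      have hc' : (((A h ∩ B h).card : ℕ) : ℝ) = c h := rfl
      rw [hc']
      have hΩne : Ω ≠ 0 := hΩpos.ne'
      field_simp
      rw [hΩdef]
      ring
    calc ∑ h, ∑ z, rem (h, z)
        = ∑ h, (PH h - (1+E) * (PH h * (((s:ℝ) - c h) / Ω))) := by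
          refine Finset.sum_congr rfl (fun h _ => ?_)
          rw [key h]; ring
      _ = (∑ h, PH h) - (1+E) * ∑ h, PH h * (((s:ℝ) - c h) / Ω) := by
          rw [Finset.sum_sub_distrib, Finset.mul_sum]
      _ = 1 - β - E*β := by rw [hPH1, ← hβexp]; ring
  -- the four distributions
  set Q1 : Fin m × Fin t → ℝ := fun u => if β = 0 then unif u else PH u.1 * ind1 u / β
    with hQ1def
  set Q1' : Fin m × Fin t → ℝ := fun u => if β = 0 then unif u else PH u.1 * ind2 u / β
    with hQ1'def
  set Q1s : Fin m × Fin t → ℝ := fun u =>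
    if 1 - β - E*β = 0 then unif u else rem u / (1 - β - E*β) with hQ1sdef
  set Qi : Fin n → Fin m × Fin t → ℝ := fun i u =>
    (collisionRand ε m Hfam PH (xs i) u - PH u.1 * ind1 u - PH u.1 * ind2 u) / (1 - 2*β)
    with hQidef
  -- zero-case structure
  have hzero : β = 0 → ∀ h, PH h = 0 ∨ (A h \ B h = ∅ ∧ B h \ A h = ∅) := by
    intro hb h
    have hsum0 : ∑ h, PH h * (((s:ℝ) - c h) / Ω) = 0 := by rw [← hβexp]; exact hb
    have hall : ∀ i ∈ Finset.univ, PH i * (((s:ℝ) - c i) / Ω) = 0 :=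
      (Finset.sum_eq_zero_iff_of_nonneg
        (fun i _ => mul_nonneg (hPH0 i) (hβh0 i))).mp hsum0
    rcases mul_eq_zero.mp (hall h (Finset.mem_univ h)) with h0 | h0
    · exact Or.inl h0
    · right
      have hsc : (s:ℝ) - c h = 0 := by
        rcases div_eq_zero_iff.mp h0 with h1 | h1
        · exact h1
        · exact absurd h1 hΩpos.ne'
      constructor
      · apply Finset.card_eq_zero.mp
        have h5 := cardAdB h
        rw [hsc] at h5
        exact_mod_cast h5
      · apply Finset.card_eq_zero.mp
        have h5 := cardBdA h
        rw [hsc] at h5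
        exact_mod_cast h5
  -- key claims
  have hβQ1 : ∀ u, β * Q1 u = PH u.1 * ind1 u := by
    intro u
    simp only [hQ1def]
    by_cases hb : β = 0
    · rw [if_pos hb, hb, zero_mul]
      rcases hzero hb u.1 with h0 | ⟨h0, _⟩
      · rw [h0, zero_mul]
      · simp only [hind1]; rw [h0]; simp
    · rw [if_neg hb, mul_comm β _, div_mul_cancel₀ _ hb]
  have hβQ1' : ∀ u, β * Q1' u = PH u.1 * ind2 u := by
    intro u
    simp only [hQ1'def]
    by_cases hb : β = 0
    · rw [if_pos hb, hb, zero_mul]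
      rcases hzero hb u.1 with h0 | ⟨_, h0⟩
      · rw [h0, zero_mul]
      · simp only [hind2]; rw [h0]; simp
    · rw [if_neg hb, mul_comm β _, div_mul_cancel₀ _ hb]
  have hγQ1s : ∀ u, (1 - β - E*β) * Q1s u = rem u := by
    intro u
    simp only [hQ1sdef]
    by_cases hg : 1 - β - E*β = 0
    · rw [if_pos hg, hg, zero_mul]
      have hall : ∀ v ∈ Finset.univ, rem v = 0 :=
        (Finset.sum_eq_zero_iff_of_nonneg (fun v _ => hrem0 v)).mp (by rw [hremsum, hg])
      exact (hall u (Finset.mem_univ u)).symm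
    · rw [if_neg hg, mul_comm _ _, div_mul_cancel₀ _ hg]
  -- probability simplification
  have hprob : ∀ (x : SparseVec d s),
      (∀ h, Set.InjOn (Hfam h) (eventSet x : Set (Fin d × Bool))) →
      ∀ u : Fin m × Fin t, collisionRand ε m Hfam PH x u
        = PH u.1 * (if u.2 ∈ (eventSet x).image (Hfam u.1) then E/Ω else 1/Ω) := by
    intro x hx u
    show PH u.1 * collisionProb ε (Hfam u.1) x u.2 = _
    rw [collisionProb_eq ε hε hs hst _ _ (hx u.1)]
  have hprob2 : ∀ (x : SparseVec d s),
      (∀ h, Set.InjOn (Hfam h) (eventSet x : Set (Fin d × Bool))) →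
      ∀ (h : Fin m) (z : Fin t), collisionRand ε m Hfam PH x (h, z)
        = PH h * (if z ∈ (eventSet x).image (Hfam h) then E/Ω else 1/Ω) := by
    intro x hx h z
    show PH h * collisionProb ε (Hfam h) x z = _
    rw [collisionProb_eq ε hε hs hst _ _ (hx h)]
  have hRsum : ∀ (x : SparseVec d s),
      (∀ h, Set.InjOn (Hfam h) (eventSet x : Set (Fin d × Bool))) →
      ∑ u, collisionRand ε m Hfam PH x u = 1 := by
    intro x hx
    rw [Fintype.sum_prod_type]
    have key : ∀ h, ∑ z, collisionRand ε m Hfam PH x (h, z) = PH h := by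
      intro h
      rw [Finset.sum_congr rfl (fun z _ => hprob2 x hx h z), ← Finset.mul_sum]
      have hcard : ((eventSet x).image (Hfam h)).card = s := by
        rw [Finset.card_image_of_injOn (hx h), eventSet_card]
      rw [sum_ite_card, hcard]
      have he : (s:ℝ) * (E/Ω) + ((t:ℝ) - s) * (1/Ω) = 1 := by
        have hΩne : Ω ≠ 0 := hΩpos.ne'
        field_simp
        rw [hΩdef]
        ring
      rw [he, mul_one]
    rw [Finset.sum_congr rfl (fun h _ => key h), hPH1]
  -- sums of PH * indicators
  have hPHind1sum : ∑ u, PH u.1 * ind1 u = β := by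
    rw [Fintype.sum_prod_type, hβexp]
    refine Finset.sum_congr rfl (fun h _ => ?_)
    dsimp only
    rw [← Finset.mul_sum, hind1sum h]
  have hPHind2sum : ∑ u, PH u.1 * ind2 u = β := by
    rw [Fintype.sum_prod_type, hβexp]
    refine Finset.sum_congr rfl (fun h _ => ?_)
    dsimp only
    rw [← Finset.mul_sum, hind2sum h]
  -- specialized probabilities
  have hprobA : ∀ u, collisionRand ε m Hfam PH x1 u
      = PH u.1 * (if u.2 ∈ A u.1 then E/Ω else 1/Ω) :=
    fun u => hprob x1 (fun h => (hinj h).1) u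
  have hprobB : ∀ u, collisionRand ε m Hfam PH x1' u
      = PH u.1 * (if u.2 ∈ B u.1 then E/Ω else 1/Ω) :=
    fun u => hprob x1' (fun h => (hinj h).2.1) u
  -- final assembly
  refine ⟨hβ0, ?_⟩
  refine ⟨?_, ?_, ?_⟩
  · -- β + E β ≤ 1
    nlinarith
  · -- 2β ≤ 1
    exact h2β
  refine ⟨Q1, Q1', Q1s, Qi, ⟨?_, ?_⟩, ⟨?_, ?_⟩, ⟨?_, ?_⟩, ?_, ?_, ?_, ?_⟩
  · -- Q1 nonneg
    intro u
    simp only [hQ1def]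
    split
    · exact hunif0 u
    · exact div_nonneg (mul_nonneg (hPH0 u.1) (hind1_0 u)) hβ0
  · -- Q1 sum
    by_cases hb : β = 0
    · simp only [hQ1def, if_pos hb]; exact hunifsum
    · simp only [hQ1def, if_neg hb]
      rw [Fintype.sum_prod_type]
      have e : ∀ h, ∑ z, PH h * ind1 (h, z) / β = PH h * (((s:ℝ) - c h)/Ω) / β := by
        intro h
        rw [← Finset.sum_div, ← Finset.mul_sum, hind1sum h]
      rw [Finset.sum_congr rfl (fun h _ => e h), ← Finset.sum_div, ← hβexp, div_self hb]
  · -- Q1' nonneg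
    intro u
    simp only [hQ1'def]
    split
    · exact hunif0 u
    · exact div_nonneg (mul_nonneg (hPH0 u.1) (hind2_0 u)) hβ0
  · -- Q1' sum
    by_cases hb : β = 0
    · simp only [hQ1'def, if_pos hb]; exact hunifsum
    · simp only [hQ1'def, if_neg hb]
      rw [Fintype.sum_prod_type]
      have e : ∀ h, ∑ z, PH h * ind2 (h, z) / β = PH h * (((s:ℝ) - c h)/Ω) / β := by
        intro h
        rw [← Finset.sum_div, ← Finset.mul_sum, hind2sum h]
      rw [Finset.sum_congr rfl (fun h _ => e h), ← Finset.sum_div, ← hβexp, div_self hb]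
  · -- Q1s nonneg
    intro u
    simp only [hQ1sdef]
    split
    · exact hunif0 u
    · rename_i hg
      exact div_nonneg (hrem0 u) (lt_of_le_of_ne hγ0 (Ne.symm hg)).le
  · -- Q1s sum
    by_cases hg : 1 - β - E*β = 0
    · simp only [hQ1sdef, if_pos hg]; exact hunifsum
    · simp only [hQ1sdef, if_neg hg]
      rw [← Finset.sum_div, hremsum, div_self hg]
  · -- Qi
    intro i
    constructor
    · intro u
      simp only [hQidef]
      apply div_nonneg _ h2βpos.le
      rw [hprob (xs i) (fun h => (hinj h).2.2 i) u]
      have hI : ind1 u + ind2 u ≤ 1/Ω := by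
        simp only [hind1, hind2]
        split_ifs with h1 h2 h2
        · exfalso
          rw [Finset.mem_sdiff] at h1 h2
          exact h2.2 h1.1
        · norm_num
        · norm_num
        · have h9 : (0:ℝ) < 1/Ω := by positivity
          linarith
      have hp : 1/Ω ≤ (if u.2 ∈ (eventSet (xs i)).image (Hfam u.1) then E/Ω else 1/Ω) := by
        split
        · exact (div_le_div_iff_of_pos_right hΩpos).mpr hE1.le
        · exact le_rfl
      have hfac : 0 ≤ (if u.2 ∈ (eventSet (xs i)).image (Hfam u.1) then E/Ω else 1/Ω)
          - ind1 u - ind2 u := by linarith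
      have hmm := mul_nonneg (hPH0 u.1) hfac
      nlinarith [hmm]
    · simp only [hQidef]
      rw [← Finset.sum_div, Finset.sum_sub_distrib, Finset.sum_sub_distrib,
        hRsum (xs i) (fun h => (hinj h).2.2 i), hPHind1sum, hPHind2sum]
      rw [show (1:ℝ) - β - β = 1 - 2*β by ring, div_self h2βpos.ne']
  · -- identity for x1
    intro u
    rw [hprobA u]
    rw [show E * β * Q1 u = E * (β * Q1 u) by ring, hβQ1 u, hβQ1' u, hγQ1s u]
    simp only [hremdef, hind1, hind2]
    by_cases hA' : u.2 ∈ A u.1 <;> by_cases hB' : u.2 ∈ B u.1 <;>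
      simp only [Finset.mem_sdiff, Finset.mem_inter, Finset.mem_union, hA', hB',
        if_true, if_false, true_and, and_true, and_false, false_and, not_true, not_false_iff,
        true_or, or_true, or_false, false_or, ite_true, ite_false] <;> ring
  · -- identity for x1'
    intro u
    rw [hprobB u]
    rw [show E * β * Q1' u = E * (β * Q1' u) by ring, hβQ1 u, hβQ1' u, hγQ1s u]
    simp only [hremdef, hind1, hind2]
    by_cases hA' : u.2 ∈ A u.1 <;> by_cases hB' : u.2 ∈ B u.1 <;>
      simp only [Finset.mem_sdiff, Finset.mem_inter, Finset.mem_union, hA', hB',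
        if_true, if_false, true_and, and_true, and_false, false_and, not_true, not_false_iff,
        true_or, or_true, or_false, false_or, ite_true, ite_false] <;> ring
  · -- identity for xs i
    intro i _ u
    have h4 : (1 - 2*β) * Qi i u
        = collisionRand ε m Hfam PH (xs i) u - PH u.1 * ind1 u - PH u.1 * ind2 u := by
      simp only [hQidef]
      rw [mul_comm, div_mul_cancel₀ _ h2βpos.ne']
    rw [hβQ1 u, hβQ1' u, h4]
    ring
end
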